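/- Let α, β ∈ C[0,1] with α(t) < β(t) for all t. Let x ∈ C[0,1] satisfy π(x) < 1, x(π(x)) = β(π(x)) and inf{ t > π(x) : x(t) > β(t) } = π(x) (i.e. x ∈ C_1). Then for every sequence (x_n) in D[0,1] converging to x in the Skorohod topology, limsup_{n → ∞} π(x_n) ≤ π(x). -/

import Mathlib

/-!
Write `τ = π(x)`. Because `inf{t > τ : x(t) > β(t)} = τ < 1`, every `s > τ` exceeds some `u`
with `x(u) > β(u)`. For the time changes `λₙ` of the Skorohod convergence, the points
`tₙ = λₙ⁻¹(u)` satisfy `tₙ → u` and `xₙ(tₙ) → x(u)`; as `β` is continuous, eventually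
`xₙ(tₙ) > β(tₙ)`, hence `π(xₙ) ≤ tₙ < s`.

The sup-norms in `SkorohodTendsto` are `sSup`s, which are junk (`0`) for unbounded functions;
this is why the paths `xₙ` must be càdlàg, hence bounded on `[0,1]`.
-/

open Set Filter

/-- A function `x : ℝ → ℝ` is RCLL (càdlàg) on `[0,1]`. -/
def RCLL (x : ℝ → ℝ) : Prop :=
  (∀ t ∈ Set.Ico (0:ℝ) 1,
      Filter.Tendsto x (nhdsWithin t (Set.Ioc t 1)) (nhds (x t))) ∧
  (∀ t ∈ Set.Ioc (0:ℝ) 1,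
      ∃ L : ℝ, Filter.Tendsto x (nhdsWithin t (Set.Ico 0 t)) (nhds L))

/-- The uniform "norm" of a function over `[0,1]`. -/
noncomputable def unifNorm (f : ℝ → ℝ) : ℝ :=
  sSup ((fun t => |f t|) '' Set.Icc 0 1)

/-- Membership in `Λ`. -/
def MemLambda (l : ℝ → ℝ) : Prop :=
  ContinuousOn l (Set.Icc 0 1) ∧ StrictMonoOn l (Set.Icc 0 1) ∧
    Set.BijOn l (Set.Icc 0 1) (Set.Icc 0 1) ∧ l 0 = 0 ∧ l 1 = 1

/-- Skorohod convergence of a sequence `x_n → x` in `D[0,1]`. -/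
def SkorohodTendsto (xn : ℕ → ℝ → ℝ) (x : ℝ → ℝ) : Prop :=
  ∃ l : ℕ → ℝ → ℝ, (∀ n, MemLambda (l n)) ∧
    Filter.Tendsto (fun n => unifNorm (fun t => l n t - t)) Filter.atTop (nhds 0) ∧
    Filter.Tendsto (fun n => unifNorm (fun t => xn n t - x (l n t))) Filter.atTop (nhds 0)

/-- The first exit time `π(x) = inf{ t ∈ [0,1] : x(t) ∉ (α(t), β(t)) } ∧ 1`
(with the convention `inf ∅ = +∞`, realized by adjoining `{1}` before taking
the infimum, since the exit set is contained in `[0,1]`). -/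
noncomputable def exitTime (a b x : ℝ → ℝ) : ℝ :=
  sInf ({t ∈ Set.Icc (0:ℝ) 1 | x t ≤ a t ∨ b t ≤ x t} ∪ {1})

/-- Membership in `C_1`: a continuous path that exits before time `1` at the
upper barrier `β`, with `inf{ t > π(x) : x(t) > β(t) } = π(x)`. -/
def MemC1 (a b x : ℝ → ℝ) : Prop :=
  ContinuousOn x (Set.Icc 0 1) ∧ exitTime a b x < 1 ∧
    x (exitTime a b x) = b (exitTime a b x) ∧
    sInf ({t | exitTime a b x < t ∧ t ≤ 1 ∧ b t < x t} ∪ {1}) = exitTime a b x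

open Topology

lemma exitTime_nonneg (a b f : ℝ → ℝ) : 0 ≤ exitTime a b f := by
  refine le_csInf ⟨1, Or.inr rfl⟩ ?_
  rintro s (⟨⟨h0, _⟩, _⟩ | rfl)
  · exact h0
  · exact zero_le_one

lemma bddBelow_exitTime_set (a b f : ℝ → ℝ) :
    BddBelow ({t ∈ Icc (0:ℝ) 1 | f t ≤ a t ∨ b t ≤ f t} ∪ {1}) :=
  ⟨0, by rintro s (⟨⟨h0, _⟩, _⟩ | rfl) <;> norm_num [*]⟩

lemma exitTime_le_one (a b f : ℝ → ℝ) : exitTime a b f ≤ 1 :=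
  csInf_le (bddBelow_exitTime_set a b f) (Or.inr rfl)

lemma exitTime_le_of_le {a b f : ℝ → ℝ} {t : ℝ} (ht : t ∈ Icc (0:ℝ) 1) (h : b t ≤ f t) :
    exitTime a b f ≤ t :=
  csInf_le (bddBelow_exitTime_set a b f) (Or.inl ⟨ht, Or.inr h⟩)

lemma MemC1.exists_lt_of_exitTime_lt {a b x : ℝ → ℝ} (hx : MemC1 a b x) {s : ℝ}
    (hs : exitTime a b x < s) : ∃ u ∈ Icc (0:ℝ) 1, u < s ∧ b u < x u := by
  obtain ⟨-, hτ1, -, hinf⟩ := hx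
  have hlt : sInf ({t | exitTime a b x < t ∧ t ≤ 1 ∧ b t < x t} ∪ {1}) < min s 1 := by
    rw [hinf]; exact lt_min hs hτ1
  obtain ⟨u, hu, hus⟩ :=
    exists_lt_of_csInf_lt (union_nonempty.2 (Or.inr (singleton_nonempty 1))) hlt
  rcases hu with ⟨hτu, hu1, hbu⟩ | rfl
  · exact ⟨u, ⟨(exitTime_nonneg a b x).trans hτu.le, hu1⟩, hus.trans_le (min_le_left _ _), hbu⟩
  · exact absurd (hus.trans_le (min_le_right _ _)) (lt_irrefl _)

lemma IsCompact.bddAbove_image_of_isBoundedUnder {X : Type*} [TopologicalSpace X]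
    {s : Set X} (hs : IsCompact s) {g : X → ℝ}
    (hg : ∀ x ∈ s, IsBoundedUnder (· ≤ ·) (𝓝[s] x) g) : BddAbove (g '' s) := by
  refine hs.induction_on (p := fun t => BddAbove (g '' t)) (by simp)
    (fun _ _ hst h => h.mono (image_mono hst))
    (fun _ _ h h' => image_union g _ _ ▸ h.union h') fun x hx => ?_
  obtain ⟨C, hC⟩ := hg x hx
  exact ⟨{y | g y ≤ C}, hC, C, by rintro _ ⟨y, hy, rfl⟩; exact hy⟩

namespace RCLL

variable {f : ℝ → ℝ}

lemma continuousWithinAt_Icc (hf : RCLL f) {u : ℝ} (hu : u ∈ Icc (0:ℝ) 1) :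
    ContinuousWithinAt f (Icc u 1) u := by
  rcases hu.2.lt_or_eq with hu1 | rfl
  · rw [← Ioc_insert_left hu1.le]
    exact ContinuousWithinAt.insert (hf.1 u ⟨hu.1, hu1⟩)
  · rw [Icc_self]
    exact continuousWithinAt_singleton

lemma exists_tendsto_left (hf : RCLL f) {u : ℝ} (hu : u ∈ Icc (0:ℝ) 1) :
    ∃ L, Tendsto f (𝓝[Ico 0 u] u) (𝓝 L) := by
  rcases hu.1.lt_or_eq with hu0 | rfl
  · exact hf.2 u ⟨hu0, hu.2⟩
  · exact ⟨0, by simp⟩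

lemma bddAbove_abs (hf : RCLL f) : BddAbove ((fun t => |f t|) '' Icc 0 1) := by
  refine isCompact_Icc.bddAbove_image_of_isBoundedUnder fun u hu => ?_
  obtain ⟨L, hL⟩ := hf.exists_tendsto_left hu
  rw [← Ico_union_Icc_eq_Icc hu.1 hu.2, nhdsWithin_union, IsBoundedUnder, map_sup]
  exact isBounded_sup hL.abs.isBoundedUnder_le (hf.continuousWithinAt_Icc hu).abs.isBoundedUnder_le

end RCLL

lemma abs_le_unifNorm {f : ℝ → ℝ} (hf : BddAbove ((fun t => |f t|) '' Icc 0 1)) {t : ℝ}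
    (ht : t ∈ Icc (0:ℝ) 1) : |f t| ≤ unifNorm f :=
  le_csSup hf (mem_image_of_mem _ ht)

lemma SkorohodTendsto.eventually_exists_near {xn : ℕ → ℝ → ℝ} {x : ℝ → ℝ}
    (h : SkorohodTendsto xn x) (hxn : ∀ n, BddAbove ((fun t => |xn n t|) '' Icc 0 1))
    (hx : BddAbove ((fun t => |x t|) '' Icc 0 1)) {u r δ : ℝ} (hu : u ∈ Icc (0:ℝ) 1)
    (hr : 0 < r) (hδ : 0 < δ) :
    ∀ᶠ n in atTop, ∃ t ∈ Icc (0:ℝ) 1, |t - u| < r ∧ |xn n t - x u| < δ := by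
  obtain ⟨l, hl, hlid, hxl⟩ := h
  filter_upwards [hlid.eventually_lt_const hr, hxl.eventually_lt_const hδ] with n hn hn'
  obtain ⟨hlc, -, hlbij, -, -⟩ := hl n
  obtain ⟨t, ht, rfl⟩ := hlbij.surjOn hu
  refine ⟨t, ht, ?_, ?_⟩
  · have hbdd : BddAbove ((fun v => |l n v - v|) '' Icc 0 1) :=
      isCompact_Icc.bddAbove_image (hlc.sub continuousOn_id).abs
    rw [abs_sub_comm]
    exact (abs_le_unifNorm hbdd ht).trans_lt hn
  · obtain ⟨M, hM⟩ := hxn n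
    obtain ⟨N, hN⟩ := hx
    have hbdd : BddAbove ((fun v => |xn n v - x (l n v)|) '' Icc 0 1) := by
      refine ⟨M + N, ?_⟩
      rintro _ ⟨v, hv, rfl⟩
      exact (abs_sub _ _).trans (add_le_add (hM (mem_image_of_mem _ hv))
        (hN (mem_image_of_mem _ (hlbij.mapsTo hv))))
    exact (abs_le_unifNorm hbdd ht).trans_lt hn'

lemma SkorohodTendsto.eventually_exitTime_lt {a b x : ℝ → ℝ} {xn : ℕ → ℝ → ℝ}
    (h : SkorohodTendsto xn x) (hxn : ∀ n, BddAbove ((fun t => |xn n t|) '' Icc 0 1))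
    (hx : BddAbove ((fun t => |x t|) '' Icc 0 1)) (hb : ContinuousOn b (Icc 0 1))
    {u ε : ℝ} (hu : u ∈ Icc (0:ℝ) 1) (hbu : b u < x u) (hε : 0 < ε) :
    ∀ᶠ n in atTop, exitTime a b (xn n) < u + ε := by
  obtain ⟨c, hbc, hcx⟩ := exists_between hbu
  obtain ⟨r, hr, hball⟩ := Metric.mem_nhdsWithin_iff.1 ((hb u hu).eventually_lt_const hbc)
  filter_upwards [h.eventually_exists_near hxn hx hu (lt_min hr hε) (sub_pos.2 hcx)]
    with n ⟨t, ht, htu, hxt⟩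
  have hbt : b t < c := hball ⟨Metric.mem_ball.2 (htu.trans_le (min_le_left _ _)), ht⟩
  have hexit : exitTime a b (xn n) ≤ t :=
    exitTime_le_of_le ht (by linarith [(abs_lt.1 hxt).1])
  linarith [(abs_lt.1 (htu.trans_le (min_le_right _ _))).2]

theorem limsup_exitTime_le_general (a b : ℝ → ℝ)
    (hb : ContinuousOn b (Set.Icc 0 1))
    (x : ℝ → ℝ) (hx : MemC1 a b x)
    (xn : ℕ → ℝ → ℝ) (hxn : ∀ n, RCLL (xn n))
    (hconv : SkorohodTendsto xn x) :
    Filter.limsup (fun n => exitTime a b (xn n)) Filter.atTop ≤ exitTime a b x := by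
  have hxn_bdd n := (hxn n).bddAbove_abs
  have hx_bdd := isCompact_Icc.bddAbove_image hx.1.abs
  refine (limsup_le_iff (isCoboundedUnder_le_of_le atTop fun n => exitTime_nonneg a b (xn n))
    (isBoundedUnder_of ⟨1, fun n => exitTime_le_one a b (xn n)⟩)).2 fun s hs => ?_
  obtain ⟨u, hu, hus, hbu⟩ := hx.exists_lt_of_exitTime_lt hs
  filter_upwards [hconv.eventually_exitTime_lt hxn_bdd hx_bdd hb hu hbu (sub_pos.2 hus)]
    with n hn
  linarith

/-- For continuous barriers `α < β` and `x ∈ C_1`, every Skorohod-convergent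
sequence `x_n → x` in `D[0,1]` satisfies `limsup_n π(x_n) ≤ π(x)`. -/
theorem limsup_exitTime_le (a b : ℝ → ℝ)
    (ha : ContinuousOn a (Set.Icc 0 1)) (hb : ContinuousOn b (Set.Icc 0 1))
    (hab : ∀ t ∈ Set.Icc (0:ℝ) 1, a t < b t)
    (x : ℝ → ℝ) (hx : MemC1 a b x)
    (xn : ℕ → ℝ → ℝ) (hxn : ∀ n, RCLL (xn n))
    (hconv : SkorohodTendsto xn x) :
    Filter.limsup (fun n => exitTime a b (xn n)) Filter.atTop ≤ exitTime a b x :=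
  limsup_exitTime_le_general a b hb x hx xn hxn hconv
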